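/- arXiv:1705.04666 — 2 statements merged into one kernel-verified Lean document; each statement's English description precedes it below -/
import Mathlib

section
/- Let F : [0,∞) → [0,∞) be a non-increasing function such that there exists a constant C > 0 with ∫_t^∞ F(s) ds ≤ C·F(t) for all t ≥ 0. Then F(t) ≤ F(0)·e^{1 - t/C} for all t ≥ 0. -/
open MeasureTheory Set Filter Topology

/-- Komornik's integral inequality lemma: a non-increasing nonnegative function whose
tail integrals are controlled by the function itself decays exponentially. -/
theorem komornik_integral_decay (F : ℝ → ℝ) (C : ℝ) (hC : 0 < C)
    (hmono : ∀ s t, 0 ≤ s → s ≤ t → F t ≤ F s)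
    (hnonneg : ∀ t, 0 ≤ t → 0 ≤ F t)
    (hint : ∀ t, 0 ≤ t → IntegrableOn F (Ioi t))
    (hineq : ∀ t, 0 ≤ t → ∫ s in Ioi t, F s ≤ C * F t) :
    ∀ t, 0 ≤ t → F t ≤ F 0 * Real.exp (1 - t / C) := by
  set E : ℝ → ℝ := fun t => ∫ s in Ioi t, F s with hE
  have hEnn : ∀ t, 0 ≤ t → 0 ≤ E t := by
    intro t ht
    exact setIntegral_nonneg measurableSet_Ioi fun s hs => hnonneg s (ht.trans hs.le)
  have hsplit : ∀ a b, 0 ≤ a → a ≤ b → E a = (∫ s in Ioc a b, F s) + E b := by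
    intro a b ha hab
    rw [hE]
    simp only
    rw [← Ioc_union_Ioi_eq_Ioi hab,
      setIntegral_union (Ioc_disjoint_Ioi le_rfl) measurableSet_Ioi
        ((hint a ha).mono_set Ioc_subset_Ioi_self) ((hint b (ha.trans hab)).mono_set subset_rfl)]
  have hlow : ∀ a b, 0 ≤ a → a ≤ b → (b - a) * F b ≤ ∫ s in Ioc a b, F s := by
    intro a b ha hab
    have h1 : (∫ _s in Ioc a b, F b) ≤ ∫ s in Ioc a b, F s := by
      apply setIntegral_mono_on (integrableOn_const (by simp) (by simp))
        ((hint a ha).mono_set Ioc_subset_Ioi_self) measurableSet_Ioc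
      intro s hs
      exact hmono s b (ha.trans hs.1.le) hs.2
    calc (b - a) * F b = (∫ _s in Ioc a b, F b) := by
          rw [setIntegral_const, Real.volume_real_Ioc_of_le hab, smul_eq_mul]
      _ ≤ _ := h1
  have hstep : ∀ a h, 0 ≤ a → 0 ≤ h → E (a + h) * (1 + h / C) ≤ E a := by
    intro a h ha hh
    have hab : a ≤ a + h := by linarith
    have h1 : E (a + h) ≤ C * F (a + h) := hineq _ (by linarith)
    have h2 : h * F (a + h) ≤ ∫ s in Ioc a (a + h), F s := by
      have := hlow a (a + h) ha hab
      simpa using this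
    have h3 : E (a + h) * (h / C) ≤ h * F (a + h) := by
      rw [div_eq_mul_inv, ← mul_assoc, mul_comm (E (a + h)) h, mul_assoc]
      apply mul_le_mul_of_nonneg_left _ hh
      rw [mul_inv_le_iff₀ hC, mul_comm]
      exact h1
    have h4 := hsplit a (a + h) ha hab
    nlinarith [hEnn (a + h) (by linarith : (0:ℝ) ≤ a + h)]
  have hiter : ∀ (h : ℝ), 0 ≤ h → ∀ n : ℕ, E (n * h) * (1 + h / C) ^ n ≤ E 0 := by
    intro h hh n
    induction n with
    | zero => simp
    | succ k ih =>
      have hk : (0:ℝ) ≤ k * h := by positivity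
      have hs := hstep (k * h) h hk hh
      have hpos : (0:ℝ) ≤ (1 + h / C) ^ k := by positivity
      calc E (↑(k + 1) * h) * (1 + h / C) ^ (k + 1)
          = (E (↑k * h + h) * (1 + h / C)) * (1 + h / C) ^ k := by
            push_cast; ring_nf
        _ ≤ E (↑k * h) * (1 + h / C) ^ k := mul_le_mul_of_nonneg_right hs hpos
        _ ≤ E 0 := ih
  have hE0 : E 0 ≤ C * F 0 := hineq 0 le_rfl
  intro t ht
  rcases le_or_gt t C with htC | htC
  · have h1 : F t ≤ F 0 := hmono 0 t le_rfl ht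
    have h2 : (1:ℝ) ≤ Real.exp (1 - t / C) := by
      rw [Real.one_le_exp_iff]
      have : t / C ≤ 1 := (div_le_one hC).2 htC
      linarith
    nlinarith [hnonneg 0 le_rfl]
  · set a := t - C with hadef
    have ha : 0 < a := by simp only [hadef]; linarith
    have hCF : C * F t ≤ E a := by
      have h1 : (t - a) * F t ≤ ∫ s in Ioc a t, F s := hlow a t ha.le (by linarith)
      have h2 := hsplit a t ha.le (by linarith)
      have h3 := hEnn t ht
      have h4 : t - a = C := by simp [hadef]
      rw [h4] at h1
      linarith
    have hkey : ∀ n : ℕ, 0 < n → C * F t * (1 + (a / C) / n) ^ n ≤ E 0 := by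
      intro n hn
      have hn' : (0:ℝ) < n := Nat.cast_pos.2 hn
      have h := hiter (a / n) (by positivity) n
      have hna : (n:ℝ) * (a / n) = a := by field_simp
      rw [hna] at h
      have hdiv : a / C / (n:ℝ) = a / n / C := by ring
      rw [hdiv]
      have hpos : (0:ℝ) ≤ (1 + a / n / C) ^ n := by positivity
      exact le_trans (mul_le_mul_of_nonneg_right hCF hpos) h
    have hlim : Tendsto (fun n : ℕ => C * F t * (1 + (a / C) / n) ^ n) atTop
        (𝓝 (C * F t * Real.exp (a / C))) :=
      (Real.tendsto_one_add_div_pow_exp (a / C)).const_mul _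
    have hfin : C * F t * Real.exp (a / C) ≤ E 0 :=
      le_of_tendsto hlim (eventually_atTop.2 ⟨1, fun n hn => hkey n hn⟩)
    have hexp : Real.exp (1 - t / C) = (Real.exp (a / C))⁻¹ := by
      rw [← Real.exp_neg]
      congr 1
      field_simp [hadef]
      linarith [hadef]
    have hEpos : 0 < Real.exp (a / C) := Real.exp_pos _
    rw [hexp]
    have h2 : C * F t * Real.exp (a / C) ≤ C * F 0 := hfin.trans hE0
    have h3 : F t * Real.exp (a / C) ≤ F 0 := by
      have := mul_le_mul_of_nonneg_left h2 (le_of_lt (inv_pos.2 hC))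
      calc F t * Real.exp (a / C) = C⁻¹ * (C * F t * Real.exp (a / C)) := by
            field_simp
        _ ≤ C⁻¹ * (C * F 0) := this
        _ = F 0 := by field_simp
    rw [← div_eq_mul_inv, le_div_iff₀ hEpos]
    exact h3
end

section
/- Let F : [0,∞) → [0,∞) be non-increasing, and assume there is C > 0 such that for all 0 ≤ t ≤ T: ∫_t^T F(s) ds ≤ C·F(T) + C·(F(t) − F(T)). Then ∫_t^∞ F(s) ds ≤ C·F(t) for all t ≥ 0, and consequently F(t) ≤ F(0)·e^{1 − t/C}. -/
open MeasureTheory Set intervalIntegral Filter Topology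

/-- Observability-type estimate combined with Komornik's lemma yields exponential
decay of the energy. -/
theorem observability_decay (F : ℝ → ℝ) (C : ℝ) (hC : 0 < C)
    (hmono : ∀ s t, 0 ≤ s → s ≤ t → F t ≤ F s)
    (hnonneg : ∀ t, 0 ≤ t → 0 ≤ F t)
    (hint : ∀ t, 0 ≤ t → IntegrableOn F (Ioi t))
    (hobs : ∀ t T : ℝ, 0 ≤ t → t ≤ T →
      (∫ s in t..T, F s) ≤ C * F T + C * (F t - F T)) :
    (∀ t, 0 ≤ t → ∫ s in Ioi t, F s ≤ C * F t) ∧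
      ∀ t, 0 ≤ t → F t ≤ F 0 * Real.exp (1 - t / C) := by
  set h : ℝ → ℝ := fun t => ∫ s in Ioi t, F s with hh
  -- Part 1
  have part1 : ∀ t, 0 ≤ t → h t ≤ C * F t := by
    intro t ht
    have tends := MeasureTheory.intervalIntegral_tendsto_integral_Ioi t (hint t ht)
      (tendsto_id (α := ℝ))
    refine le_of_tendsto tends ?_
    filter_upwards [eventually_ge_atTop t] with T hT
    have := hobs t T ht hT
    simp only [id] at *
    linarith
  have hnn : ∀ t, 0 ≤ t → 0 ≤ h t := by
    intro t ht
    exact setIntegral_nonneg measurableSet_Ioi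
      (fun s hs => hnonneg s (le_of_lt (lt_of_le_of_lt ht hs)))
  -- splitting lemma
  have hsplit : ∀ a b : ℝ, 0 ≤ a → a ≤ b → h a = (∫ s in Ioc a b, F s) + h b := by
    intro a b ha hab
    have hdisj : Disjoint (Ioc a b) (Ioi b) := by
      apply Set.disjoint_left.2
      intro x hx hx'
      exact absurd hx.2 (not_le.2 hx')
    have h1 : IntegrableOn F (Ioc a b) := (hint a ha).mono_set Ioc_subset_Ioi_self
    have h2 : IntegrableOn F (Ioi b) := hint b (ha.trans hab)
    simp only [hh]
    rw [← Set.Ioc_union_Ioi_eq_Ioi hab, setIntegral_union hdisj measurableSet_Ioi h1 h2]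
  -- lower bound on slice
  have hlow : ∀ a b : ℝ, 0 ≤ a → a ≤ b → (b - a) * F b ≤ ∫ s in Ioc a b, F s := by
    intro a b ha hab
    have hmon : ∫ s in Ioc a b, F b ≤ ∫ s in Ioc a b, F s := by
      refine setIntegral_mono_on (integrableOn_const (LT.lt.ne ?_))
        ((hint a ha).mono_set Ioc_subset_Ioi_self) measurableSet_Ioc ?_
      · rw [Real.volume_Ioc]; exact ENNReal.ofReal_lt_top
      · intro s hs
        exact hmono s b (le_of_lt (lt_of_le_of_lt ha hs.1)) hs.2
    have hconst : ∫ s in Ioc a b, F b = (b - a) * F b := by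
      rw [setIntegral_const, measureReal_def, Real.volume_Ioc, ENNReal.toReal_ofReal (by linarith), smul_eq_mul]
    linarith [hmon, hconst.symm.le]
  -- step inequality
  have step : ∀ a ε : ℝ, 0 ≤ a → 0 ≤ ε → (1 + ε / C) * h (a + ε) ≤ h a := by
    intro a ε ha hε
    have hsp := hsplit a (a + ε) ha (by linarith)
    have hlo := hlow a (a + ε) ha (by linarith)
    have hp1 := part1 (a + ε) (by linarith)
    have : ε / C * h (a + ε) ≤ ε * F (a + ε) := by
      rw [div_mul_eq_mul_div, div_le_iff₀ hC]
      calc ε * h (a + ε) ≤ ε * (C * F (a + ε)) :=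
            mul_le_mul_of_nonneg_left hp1 hε
        _ = ε * F (a + ε) * C := by ring
    have harg : a + ε - a = ε := by ring
    rw [harg] at hlo
    nlinarith
  -- iterated inequality
  have iter : ∀ ε : ℝ, 0 ≤ ε → ∀ k : ℕ, (1 + ε / C) ^ k * h ((k : ℝ) * ε) ≤ h 0 := by
    intro ε hε k
    induction k with
    | zero => simp
    | succ k ih =>
      have hk : (0 : ℝ) ≤ (k : ℝ) * ε := mul_nonneg (Nat.cast_nonneg k) hε
      have hstep := step ((k : ℝ) * ε) ε hk hε
      have hpow : (0 : ℝ) ≤ (1 + ε / C) ^ k := by positivity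
      have harg : ((k + 1 : ℕ) : ℝ) * ε = (k : ℝ) * ε + ε := by push_cast; ring
      rw [harg, pow_succ]
      calc (1 + ε / C) ^ k * (1 + ε / C) * h ((k : ℝ) * ε + ε)
          = (1 + ε / C) ^ k * ((1 + ε / C) * h ((k : ℝ) * ε + ε)) := by ring
        _ ≤ (1 + ε / C) ^ k * h ((k : ℝ) * ε) := mul_le_mul_of_nonneg_left hstep hpow
        _ ≤ h 0 := ih
  -- exponential decay of h
  have hdecay : ∀ t : ℝ, 0 ≤ t → h t ≤ h 0 * Real.exp (-(t / C)) := by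
    intro t ht
    have tends : Tendsto (fun n : ℕ => (1 + (t / C) / (n : ℝ)) ^ n * h t) atTop
        (𝓝 (Real.exp (t / C) * h t)) :=
      (Real.tendsto_one_add_div_pow_exp (t / C)).mul_const _
    have hle : Real.exp (t / C) * h t ≤ h 0 := by
      refine le_of_tendsto tends ?_
      filter_upwards [eventually_ge_atTop 1] with n hn
      have hn0 : (0 : ℝ) < (n : ℝ) := by exact_mod_cast hn
      have hε : 0 ≤ t / n := div_nonneg ht hn0.le
      have := iter (t / n) hε n
      have harg : (n : ℝ) * (t / n) = t := by field_simp
      have harg2 : (t / C) / (n : ℝ) = (t / n) / C := by ring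
      rw [harg] at this
      rw [harg2]
      exact this
    rw [Real.exp_neg, mul_comm (h 0), inv_mul_eq_div, le_div_iff₀ (Real.exp_pos _)]
    linarith [hle]
  refine ⟨part1, ?_⟩
  intro t ht
  by_cases hcase : t ≤ C
  · have h1 : F t ≤ F 0 := hmono 0 t le_rfl ht
    have h2 : (1 : ℝ) ≤ Real.exp (1 - t / C) := by
      apply Real.one_le_exp
      have : t / C ≤ 1 := (div_le_one hC).2 hcase
      linarith
    nlinarith [hnonneg 0 le_rfl]
  · push_neg at hcase
    set a : ℝ := t - C with ha
    have ha0 : 0 ≤ a := by simp [ha]; linarith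
    have hat : a ≤ t := by simp [ha]; linarith
    have hCeq : t - a = C := by simp [ha]
    have h1 : C * F t ≤ ∫ s in Ioc a t, F s := by
      have := hlow a t ha0 hat
      rwa [hCeq] at this
    have h2 : (∫ s in Ioc a t, F s) ≤ h a := by
      have := hsplit a t ha0 hat
      have := hnn t ht
      linarith
    have h3 : h a ≤ h 0 * Real.exp (-(a / C)) := hdecay a ha0
    have h4 : h 0 ≤ C * F 0 := part1 0 le_rfl
    have hexp : Real.exp (-(a / C)) = Real.exp (1 - t / C) := by
      congr 1
      field_simp [ha]
      linarith
    have hepos : 0 < Real.exp (-(a / C)) := Real.exp_pos _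
    have : C * F t ≤ C * F 0 * Real.exp (-(a / C)) := by
      calc C * F t ≤ h a := le_trans h1 h2
        _ ≤ h 0 * Real.exp (-(a / C)) := h3
        _ ≤ C * F 0 * Real.exp (-(a / C)) :=
            mul_le_mul_of_nonneg_right h4 hepos.le
    rw [hexp] at this
    nlinarith
end
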